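/- For all R, R_d ∈ SO(3) and every real ψ_1 with Ψ(R, R_d) ≤ ψ_1 < 2, the attitude error function is sandwiched by the attitude error vector: (1/2) ‖e_R‖^2 ≤ Ψ(R, R_d) ≤ (1/(2 − ψ_1)) ‖e_R‖^2. -/

import Mathlib

open Real Matrix

/-- `SO(3)`: real 3×3 matrices `Q` with `Qᵀ Q = I` and `det Q = 1`. -/
def SO3 (Q : Matrix (Fin 3) (Fin 3) ℝ) : Prop :=
  Qᵀ * Q = 1 ∧ Q.det = 1

/-- The attitude error function `Ψ(R, R_d) = (1/2) tr(I − R_dᵀ R)`. -/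
noncomputable def Psi (R Rd : Matrix (Fin 3) (Fin 3) ℝ) : ℝ :=
  (1 / 2 : ℝ) * (1 - Rdᵀ * R).trace

/-- The attitude error vector `e_R = (1/2) (R_dᵀ R − Rᵀ R_d)∨`, where `∨` is the
vee map from skew-symmetric matrices to `ℝ³`. -/
noncomputable def errVec (R Rd : Matrix (Fin 3) (Fin 3) ℝ) : EuclideanSpace ℝ (Fin 3) :=
  (1 / 2 : ℝ) • (WithLp.toLp 2 ![(Rdᵀ * R - Rᵀ * Rd) 2 1, (Rdᵀ * R - Rᵀ * Rd) 0 2,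
    (Rdᵀ * R - Rᵀ * Rd) 1 0] : EuclideanSpace ℝ (Fin 3))

lemma psi_sandwich_aux (p e ψ₁ : ℝ) (hk : e = p * (2 - p)) (hp : 0 ≤ p)
    (h1 : p ≤ ψ₁) (h2 : ψ₁ < 2) :
    (1 / 2 : ℝ) * e ≤ p ∧ p ≤ (1 / (2 - ψ₁)) * e := by
  have h2ψ : 0 < 2 - ψ₁ := by linarith
  constructor
  · nlinarith [sq_nonneg p]
  · rw [div_mul_eq_mul_div, le_div_iff₀ h2ψ, hk]
    nlinarith [mul_nonneg hp (sub_nonneg.mpr h1)]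

/-- For all `R, R_d ∈ SO(3)` and every `ψ₁` with `Ψ(R, R_d) ≤ ψ₁ < 2`, the attitude
error function is sandwiched: `(1/2)‖e_R‖² ≤ Ψ(R, R_d) ≤ (1/(2 − ψ₁))‖e_R‖²`. -/
theorem psi_sandwich (R Rd : Matrix (Fin 3) (Fin 3) ℝ)
    (hR : SO3 R) (hRd : SO3 Rd) (ψ₁ : ℝ) (h₁ : Psi R Rd ≤ ψ₁) (h₂ : ψ₁ < 2) :
    (1 / 2 : ℝ) * ‖errVec R Rd‖ ^ 2 ≤ Psi R Rd ∧
      Psi R Rd ≤ (1 / (2 - ψ₁)) * ‖errVec R Rd‖ ^ 2 := by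
  obtain ⟨hR1, hR2⟩ := hR
  obtain ⟨hRd1, hRd2⟩ := hRd
  set Q : Matrix (Fin 3) (Fin 3) ℝ := Rdᵀ * R with hQdef
  have hRd1' : Rd * Rdᵀ = 1 := mul_eq_one_comm.mp hRd1
  have hQ1 : Qᵀ * Q = 1 := by
    rw [hQdef, transpose_mul, transpose_transpose, mul_assoc, ← mul_assoc Rd, hRd1',
      one_mul, hR1]
  have hQ2 : Q * Qᵀ = 1 := mul_eq_one_comm.mp hQ1
  have hdet : Q.det = 1 := by
    rw [hQdef, det_mul, det_transpose, hRd2, hR2, one_mul]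
  have hadj : adjugate Q = Qᵀ := by
    calc adjugate Q = (Qᵀ * Q) * adjugate Q := by rw [hQ1, one_mul]
      _ = Qᵀ * (Q * adjugate Q) := by rw [mul_assoc]
      _ = Qᵀ := by rw [mul_adjugate, hdet, one_smul, mul_one]
  -- cofactor relations
  have hc1 : Q 1 1 * Q 2 2 - Q 1 2 * Q 2 1 = Q 0 0 := by
    have := congrFun (congrFun hadj 0) 0
    rwa [adjugate_fin_three, transpose_apply] at this
  have hc2 : Q 0 0 * Q 2 2 - Q 0 2 * Q 2 0 = Q 1 1 := by
    have := congrFun (congrFun hadj 1) 1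
    rwa [adjugate_fin_three, transpose_apply] at this
  have hc3 : Q 0 0 * Q 1 1 - Q 0 1 * Q 1 0 = Q 2 2 := by
    have := congrFun (congrFun hadj 2) 2
    rwa [adjugate_fin_three, transpose_apply] at this
  -- row norms
  have hr : ∀ i : Fin 3, Q i 0 * Q i 0 + Q i 1 * Q i 1 + Q i 2 * Q i 2 = 1 := by
    intro i
    have := congrFun (congrFun hQ2 i) i
    simpa [Matrix.mul_apply, Fin.sum_univ_three, Matrix.one_apply] using this
  have hr0 := hr 0
  have hr1 := hr 1
  have hr2 := hr 2
  -- Psi in terms of trace entries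
  have hPsi : Psi R Rd = (1 / 2 : ℝ) * (3 - (Q 0 0 + Q 1 1 + Q 2 2)) := by
    simp [Psi, Matrix.trace, Matrix.diag, Fin.sum_univ_three, Matrix.sub_apply,
      Matrix.one_apply, ← hQdef]
  -- norm squared of errVec
  have hQT : Rᵀ * Rd = Qᵀ := by rw [hQdef, transpose_mul, transpose_transpose]
  have hnorm : ‖errVec R Rd‖ ^ 2 =
      (1 / 4 : ℝ) * ((Q 2 1 - Q 1 2) ^ 2 + (Q 0 2 - Q 2 0) ^ 2 + (Q 1 0 - Q 0 1) ^ 2) := by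
    rw [EuclideanSpace.norm_eq, Real.sq_sqrt (by positivity)]
    simp [errVec, Fin.sum_univ_three, Matrix.sub_apply, hQT, ← hQdef, transpose_apply,
      Real.norm_eq_abs]
    rw [mul_pow, mul_pow, mul_pow, sq_abs, sq_abs, sq_abs]
    ring
  -- key identity ‖e‖² = Ψ(2 − Ψ)
  have hkey : ‖errVec R Rd‖ ^ 2 = Psi R Rd * (2 - Psi R Rd) := by
    rw [hnorm, hPsi]
    linear_combination (1/4 : ℝ) * hr0 + (1/4 : ℝ) * hr1 + (1/4 : ℝ) * hr2
      + (1/2 : ℝ) * hc1 + (1/2 : ℝ) * hc2 + (1/2 : ℝ) * hc3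
  -- Ψ ≥ 0 since each diagonal entry ≤ 1
  have hPsi0 : 0 ≤ Psi R Rd := by
    rw [hPsi]
    nlinarith [sq_nonneg (Q 0 0 - 1), sq_nonneg (Q 1 1 - 1), sq_nonneg (Q 2 2 - 1),
      sq_nonneg (Q 0 1), sq_nonneg (Q 0 2), sq_nonneg (Q 1 0), sq_nonneg (Q 1 2),
      sq_nonneg (Q 2 0), sq_nonneg (Q 2 1)]
  exact psi_sandwich_aux (Psi R Rd) (‖errVec R Rd‖ ^ 2) ψ₁ hkey hPsi0 h₁ h₂
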